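/- arXiv:0811.3412 — 3 statements merged into one kernel-verified Lean document; each statement's English description precedes it below -/
import Mathlib

section
/- Let H be a finite-dimensional complex inner product space, let Π_red and Π_blue be orthogonal projections on H, let ψ ∈ H be a unit vector, and let Δ > 0 be a real number. If ‖Π_red (Π_blue ψ)‖² ≤ 1 − Δ², then max{ ‖(id − Π_red)(ψ)‖² , ‖(id − Π_blue)(ψ)‖² } ≥ Δ²/8. -/
open scoped InnerProductSpace

lemma proj_pyth {H : Type*} [NormedAddCommGroup H] [InnerProductSpace ℂ H]
    [FiniteDimensional ℂ H]
    (P : H →L[ℂ] H) (hi : IsIdempotentElem P) (hs : IsSelfAdjoint P) (x : H) :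
    ‖P x‖ ^ 2 + ‖x - P x‖ ^ 2 = ‖x‖ ^ 2 := by
  have hPP : P (P x) = P x := by
    have := congrFun (congrArg DFunLike.coe hi) x
    simpa [ContinuousLinearMap.mul_apply] using this
  have horth : ⟪P x, x - P x⟫_ℂ = 0 := by
    nth_rewrite 1 [← hs.adjoint_eq]
    rw [ContinuousLinearMap.adjoint_inner_left, map_sub, hPP, sub_self, inner_zero_right]
  have hsum : ‖P x + (x - P x)‖ ^ 2 = ‖P x‖ ^ 2 + ‖x - P x‖ ^ 2 := by
    have := norm_add_sq_eq_norm_sq_add_norm_sq_of_inner_eq_zero _ _ horth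
    simpa [pow_two] using this
  have : P x + (x - P x) = x := by abel
  rw [this] at hsum
  linarith

/-- **Two-layer (ℓ = 0) detectability lemma, deduction step.**
If `‖Π_red (Π_blue ψ)‖² ≤ 1 - Δ²` for a unit vector `ψ`, then
`max{‖(id - Π_red) ψ‖², ‖(id - Π_blue) ψ‖²} ≥ Δ²/8`. -/
theorem detectability_two_layers
    (H : Type*) [NormedAddCommGroup H] [InnerProductSpace ℂ H] [FiniteDimensional ℂ H]
    (Pred Pblue : H →L[ℂ] H)
    (hred_idem : IsIdempotentElem Pred) (hred_sa : IsSelfAdjoint Pred)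
    (hblue_idem : IsIdempotentElem Pblue) (hblue_sa : IsSelfAdjoint Pblue)
    (ψ : H) (hψ : ‖ψ‖ = 1) (Δ : ℝ) (hΔ : 0 < Δ)
    (h : ‖Pred (Pblue ψ)‖ ^ 2 ≤ 1 - Δ ^ 2) :
    max (‖ψ - Pred ψ‖ ^ 2) (‖ψ - Pblue ψ‖ ^ 2) ≥ Δ ^ 2 / 8 := by
  set a := ‖ψ - Pred ψ‖ with ha
  set b := ‖ψ - Pblue ψ‖ with hb
  have h1 : ‖Pblue ψ‖ ^ 2 + b ^ 2 = 1 := by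
    have := proj_pyth Pblue hblue_idem hblue_sa ψ
    rw [hψ] at this; simpa using this
  have h2 : ‖Pred (Pblue ψ)‖ ^ 2 + ‖Pblue ψ - Pred (Pblue ψ)‖ ^ 2 = ‖Pblue ψ‖ ^ 2 :=
    proj_pyth Pred hred_idem hred_sa (Pblue ψ)
  -- bound the cross term
  have hdecomp : Pblue ψ - Pred (Pblue ψ)
      = (ψ - Pred ψ) - ((ψ - Pblue ψ) - Pred (ψ - Pblue ψ)) := by
    simp only [map_sub]; abel
  have hc1 : ‖(ψ - Pblue ψ) - Pred (ψ - Pblue ψ)‖ ≤ b := by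
    have := proj_pyth Pred hred_idem hred_sa (ψ - Pblue ψ)
    have h0 : (0:ℝ) ≤ ‖Pred (ψ - Pblue ψ)‖ ^ 2 := by positivity
    nlinarith [norm_nonneg ((ψ - Pblue ψ) - Pred (ψ - Pblue ψ)), norm_nonneg (ψ - Pblue ψ)]
  have hc : ‖Pblue ψ - Pred (Pblue ψ)‖ ≤ a + b := by
    rw [hdecomp]
    calc ‖(ψ - Pred ψ) - ((ψ - Pblue ψ) - Pred (ψ - Pblue ψ))‖
        ≤ ‖ψ - Pred ψ‖ + ‖(ψ - Pblue ψ) - Pred (ψ - Pblue ψ)‖ := norm_sub_le _ _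
      _ ≤ a + b := by rw [← ha]; linarith
  have hcsq : ‖Pblue ψ - Pred (Pblue ψ)‖ ^ 2 ≤ (a + b) ^ 2 := by
    have := norm_nonneg (Pblue ψ - Pred (Pblue ψ))
    nlinarith
  have hab : 0 ≤ a := norm_nonneg _
  have hbb : 0 ≤ b := norm_nonneg _
  have hmax : a ^ 2 ≤ max (a ^ 2) (b ^ 2) := le_max_left _ _
  have hmax2 : b ^ 2 ≤ max (a ^ 2) (b ^ 2) := le_max_right _ _
  nlinarith [sq_nonneg (a - b)]
end

section
/- Let H be a finite-dimensional complex inner product space and let Δ_b, R_b, Δ_r, R_r, P be orthogonal projections on H such that Δ_b R_b = R_b Δ_b, Δ_r R_r = R_r Δ_r, R_r Δ_b = Δ_b R_r, P Δ_b = Δ_b P, and P Δ_r = Δ_r P. Then for every vector ψ ∈ H, ‖P (Δ_r R_r) (Δ_b R_b) ψ‖² ≤ ‖P Δ_b Δ_r Δ_b P‖ · ‖P (R_r R_b ψ)‖², where ‖P Δ_b Δ_r Δ_b P‖ is the operator norm. -/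
open scoped InnerProductSpace

lemma sa_inner_move {H : Type*} [NormedAddCommGroup H] [InnerProductSpace ℂ H]
    [FiniteDimensional ℂ H] (T : H →L[ℂ] H) (h : IsSelfAdjoint T) (x y : H) :
    ⟪T x, y⟫_ℂ = ⟪x, T y⟫_ℂ := by
  conv_lhs => rw [← h.adjoint_eq]
  exact ContinuousLinearMap.adjoint_inner_left T y x

/-- **Per-sector inequality of the exponential decay lemma (two layers).**
With the layer projections factored as `Π_blue = Δ_b R_b` and `Π_red = Δ_r R_r`,
and an XY-sector projection `P` commuting with the pyramid parts,
`‖P (Δ_r R_r)(Δ_b R_b) ψ‖² ≤ ‖P Δ_b Δ_r Δ_b P‖ · ‖P (R_r R_b ψ)‖²`. -/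
theorem sector_inequality
    (H : Type*) [NormedAddCommGroup H] [InnerProductSpace ℂ H] [FiniteDimensional ℂ H]
    (Δb Rb Δr Rr P : H →L[ℂ] H)
    (hΔb_idem : IsIdempotentElem Δb) (hΔb_sa : IsSelfAdjoint Δb)
    (hRb_idem : IsIdempotentElem Rb) (hRb_sa : IsSelfAdjoint Rb)
    (hΔr_idem : IsIdempotentElem Δr) (hΔr_sa : IsSelfAdjoint Δr)
    (hRr_idem : IsIdempotentElem Rr) (hRr_sa : IsSelfAdjoint Rr)
    (hP_idem : IsIdempotentElem P) (hP_sa : IsSelfAdjoint P)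
    (hb : Δb * Rb = Rb * Δb) (hr : Δr * Rr = Rr * Δr)
    (hrb : Rr * Δb = Δb * Rr)
    (hPb : P * Δb = Δb * P) (hPr : P * Δr = Δr * P)
    (ψ : H) :
    ‖(P * ((Δr * Rr) * (Δb * Rb))) ψ‖ ^ 2 ≤
      ‖P * (Δb * (Δr * Δb)) * P‖ * ‖P ((Rr * Rb) ψ)‖ ^ 2 := by
  set φ : H := P ((Rr * Rb) ψ) with hφ
  set A : H →L[ℂ] H := P * (Δb * (Δr * Δb)) * P with hA
  -- operator identity
  have hop : P * ((Δr * Rr) * (Δb * Rb)) = Δr * (Δb * (P * (Rr * Rb))) := by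
    calc P * ((Δr * Rr) * (Δb * Rb))
        = P * (Δr * ((Rr * Δb) * Rb)) := by noncomm_ring
      _ = P * (Δr * ((Δb * Rr) * Rb)) := by rw [hrb]
      _ = (P * Δr) * (Δb * (Rr * Rb)) := by noncomm_ring
      _ = (Δr * P) * (Δb * (Rr * Rb)) := by rw [hPr]
      _ = Δr * ((P * Δb) * (Rr * Rb)) := by noncomm_ring
      _ = Δr * ((Δb * P) * (Rr * Rb)) := by rw [hPb]
      _ = Δr * (Δb * (P * (Rr * Rb))) := by noncomm_ring
  have hvec : (P * ((Δr * Rr) * (Δb * Rb))) ψ = Δr (Δb φ) := by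
    rw [hop]; simp [ContinuousLinearMap.mul_apply, hφ]
  have hPφ : P φ = φ := by
    have := congrArg (fun T : H →L[ℂ] H => T ((Rr * Rb) ψ)) hP_idem
    simpa [ContinuousLinearMap.mul_apply, hφ] using this
  have hΔrΔb : Δr (Δr (Δb φ)) = Δr (Δb φ) := by
    have := congrArg (fun T : H →L[ℂ] H => T (Δb φ)) hΔr_idem
    simpa [ContinuousLinearMap.mul_apply] using this
  have key : ⟪A φ, φ⟫_ℂ = ⟪Δr (Δb φ), Δr (Δb φ)⟫_ℂ := by
    have hAφ : A φ = P (Δb (Δr (Δb φ))) := by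
      simp [hA, ContinuousLinearMap.mul_apply, hPφ]
    rw [hAφ, sa_inner_move P hP_sa, hPφ, sa_inner_move Δb hΔb_sa,
      ← hΔrΔb, sa_inner_move Δr hΔr_sa, hΔrΔb]
  have hnorm : ‖Δr (Δb φ)‖ ^ 2 = RCLike.re (⟪A φ, φ⟫_ℂ) := by
    rw [key]; exact (inner_self_eq_norm_sq _).symm
  have hCS : RCLike.re (⟪A φ, φ⟫_ℂ) ≤ ‖A‖ * ‖φ‖ ^ 2 := by
    calc RCLike.re (⟪A φ, φ⟫_ℂ) ≤ ‖⟪A φ, φ⟫_ℂ‖ := RCLike.re_le_norm _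
      _ ≤ ‖A φ‖ * ‖φ‖ := norm_inner_le_norm _ _
      _ ≤ (‖A‖ * ‖φ‖) * ‖φ‖ := by
          gcongr
          exact A.le_opNorm φ
      _ = ‖A‖ * ‖φ‖ ^ 2 := by ring
  rw [hvec]
  calc ‖Δr (Δb φ)‖ ^ 2 = RCLike.re (⟪A φ, φ⟫_ℂ) := hnorm
    _ ≤ ‖A‖ * ‖φ‖ ^ 2 := hCS
end

section
/- Let 0 < θ < 1 and 0 < x ≤ 1 be real numbers, let m be a natural number, and let η₀, η₁, …, η_m be nonnegative real numbers with Σ_{s=0}^{m} η_s² ≤ 1 and x² ≤ Σ_{s=0}^{m} θ^{2s} η_s². Then Σ_{s=0}^{m} s · θ^{2s} · η_s² ≤ (1 − x²) · θ² / (1 − θ²)³. -/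
/-- **Energy-sum bound in the two-layer (ℓ = 0) detectability lemma.**
For `0 < θ < 1`, `0 < x ≤ 1`, and nonnegative `η_0, …, η_m` with `Σ η_s² ≤ 1` and
`x² ≤ Σ θ^{2s} η_s²`, one has `Σ_{s=0}^m s·θ^{2s}·η_s² ≤ (1 - x²)·θ²/(1 - θ²)³`. -/
theorem energy_sum_bound
    (θ x : ℝ) (hθ0 : 0 < θ) (hθ1 : θ < 1) (hx0 : 0 < x) (hx1 : x ≤ 1)
    (m : ℕ) (η : ℕ → ℝ) (hη_nonneg : ∀ s, 0 ≤ η s)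
    (hnorm : ∑ s ∈ Finset.range (m + 1), η s ^ 2 ≤ 1)
    (hx : x ^ 2 ≤ ∑ s ∈ Finset.range (m + 1), θ ^ (2 * s) * η s ^ 2) :
    ∑ s ∈ Finset.range (m + 1), (s : ℝ) * θ ^ (2 * s) * η s ^ 2 ≤
      (1 - x ^ 2) * θ ^ 2 / (1 - θ ^ 2) ^ 3 := by
  set q := θ ^ 2 with hqdef
  have hq0 : 0 < q := by positivity
  have hq1 : q < 1 := by nlinarith
  have hqd : 0 < 1 - q := by linarith
  have hC0 : 0 ≤ (1 - x ^ 2) / (1 - q) := by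
    apply div_nonneg _ hqd.le; nlinarith
  have key : ∀ s ∈ Finset.range (m + 1),
      (s : ℝ) * θ ^ (2 * s) * η s ^ 2 ≤ (s : ℝ) * q ^ s * ((1 - x ^ 2) / (1 - q)) := by
    intro s hs
    rcases Nat.eq_zero_or_pos s with rfl | hs1
    · simp
    · have hqs : θ ^ (2 * s) = q ^ s := by rw [hqdef, ← pow_mul, Nat.mul_comm]
      rw [hqs]
      have hηs : η s ^ 2 ≤ (1 - x ^ 2) / (1 - q) := by
        have hsplit : ∑ t ∈ Finset.range (m + 1), θ ^ (2 * t) * η t ^ 2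
            ≤ (∑ t ∈ Finset.range (m + 1), η t ^ 2) - (1 - q) * η s ^ 2 := by
          have h1 : (∑ t ∈ (Finset.range (m + 1)).erase s, θ ^ (2 * t) * η t ^ 2)
              + θ ^ (2 * s) * η s ^ 2 = ∑ t ∈ Finset.range (m + 1), θ ^ (2 * t) * η t ^ 2 :=
            Finset.sum_erase_add _ _ hs
          have h2 : (∑ t ∈ (Finset.range (m + 1)).erase s, η t ^ 2)
              + η s ^ 2 = ∑ t ∈ Finset.range (m + 1), η t ^ 2 :=
            Finset.sum_erase_add _ _ hs
          have h3 : ∑ t ∈ (Finset.range (m + 1)).erase s, θ ^ (2 * t) * η t ^ 2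
              ≤ ∑ t ∈ (Finset.range (m + 1)).erase s, η t ^ 2 := by
            apply Finset.sum_le_sum
            intro t _
            have ht1 : θ ^ (2 * t) ≤ 1 := pow_le_one₀ hθ0.le hθ1.le
            have ht0 : 0 ≤ θ ^ (2 * t) := by positivity
            nlinarith [sq_nonneg (η t)]
          have h4 : θ ^ (2 * s) ≤ q := by
            rw [hqs]
            calc q ^ s ≤ q ^ 1 := pow_le_pow_of_le_one hq0.le hq1.le hs1
            _ = q := pow_one q
          nlinarith [sq_nonneg (η s)]
        have hle : x ^ 2 ≤ 1 - (1 - q) * η s ^ 2 := le_trans hx (by linarith)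
        rw [le_div_iff₀ hqd]; nlinarith
      have hsq : (0 : ℝ) ≤ (s : ℝ) * q ^ s := by positivity
      exact mul_le_mul_of_nonneg_left hηs hsq
  have hgeom : ∑ s ∈ Finset.range (m + 1), (s : ℝ) * q ^ s ≤ q / (1 - q) ^ 2 := by
    have hnq : ‖q‖ < 1 := by rw [Real.norm_eq_abs, abs_of_pos hq0]; exact hq1
    exact sum_le_hasSum _ (fun n _ => by positivity)
      (hasSum_coe_mul_geometric_of_norm_lt_one hnq)
  calc ∑ s ∈ Finset.range (m + 1), (s : ℝ) * θ ^ (2 * s) * η s ^ 2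
      ≤ ∑ s ∈ Finset.range (m + 1), (s : ℝ) * q ^ s * ((1 - x ^ 2) / (1 - q)) :=
        Finset.sum_le_sum key
    _ = (∑ s ∈ Finset.range (m + 1), (s : ℝ) * q ^ s) * ((1 - x ^ 2) / (1 - q)) := by
        rw [Finset.sum_mul]
    _ ≤ (q / (1 - q) ^ 2) * ((1 - x ^ 2) / (1 - q)) :=
        mul_le_mul_of_nonneg_right hgeom hC0
    _ = (1 - x ^ 2) * q / (1 - q) ^ 3 := by
        field_simp
end
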